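/- arXiv:2308.07755 — 3 statements merged into one kernel-verified Lean document; each statement's English description precedes it below -/
import Mathlib

section
/- Let (M;ρ,d_M) be a representation of a modified λ-differential 3-Lie algebra (A,[-,-,-],d), and let (f1,g1) and (f2,g2) be two 2-cocycles whose difference is the coboundary of a linear map ι : A → M, i.e. f1(a1,a2,a3) - f2(a1,a2,a3) = ρ(a2,a3)ι(a1) + ρ(a3,a1)ι(a2) + ρ(a1,a2)ι(a3) - ι([a1,a2,a3]) and g1(a) - g2(a) = d_M(ι(a)) - ι(d(a)). Then the linear map η_ι : A⊕M → A⊕M, η_ι(a+u) = a + ι(a) + u, is an isomorphism of modified λ-differential 3-Lie algebras from (A⊕M, [-,-,-]_{ρf1}, d_{g1}) to (A⊕M, [-,-,-]_{ρf2}, d_{g2}) satisfying η_ι|_M = id_M and p∘η_ι = p (where p is the projection onto A); i.e. the two abelian extensions are equivalent. -/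
open Finset

section Prelude

variable (k : Type*) {A W M : Type*} [Field k] [CharZero k]
  [AddCommGroup A] [Module k A] [AddCommGroup W] [Module k W]
  [AddCommGroup M] [Module k M]

/-- A trilinear, totally skew-symmetric map `A × A × A → W`. -/
def IsTriSkew (f : A → A → A → W) : Prop :=
  (∀ (t : k) (a a' b c : A), f (t • a + a') b c = t • f a b c + f a' b c) ∧
  (∀ (t : k) (a b b' c : A), f a (t • b + b') c = t • f a b c + f a b' c) ∧
  (∀ (t : k) (a b c c' : A), f a b (t • c + c') = t • f a b c + f a b c') ∧
  (∀ a b c : A, f a b c = - f b a c) ∧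
  (∀ a b c : A, f a b c = - f a c b)

/-- `br` makes `A` a 3-Lie algebra: it is trilinear, totally skew-symmetric and
satisfies the Filippov identity. -/
def Is3LieBr (br : A → A → A → A) : Prop :=
  IsTriSkew k br ∧
  ∀ a1 a2 a3 a4 a5 : A, br a1 a2 (br a3 a4 a5) =
    br (br a1 a2 a3) a4 a5 + br a3 (br a1 a2 a4) a5 + br a3 a4 (br a1 a2 a5)

/-- `d` is a modified `lam`-differential operator on `(A, br)`. -/
def IsMDiffOn (br : A → A → A → A) (lam : k) (d : A → A) : Prop :=
  ∀ a b c : A, d (br a b c) =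
    br (d a) b c + br a (d b) c + br a b (d c) + lam • br a b c

/-- `ρ` is a representation of the 3-Lie algebra `(A, br)` on `M`. -/
def Is3LieRep (br : A → A → A → A) (ρ : A → A → M →ₗ[k] M) : Prop :=
  (∀ (t : k) (a a' b : A), ρ (t • a + a') b = t • ρ a b + ρ a' b) ∧
  (∀ (t : k) (a b b' : A), ρ a (t • b + b') = t • ρ a b + ρ a b') ∧
  (∀ a b : A, ρ a b = - ρ b a) ∧
  (∀ a1 a2 a3 a4 : A, ρ (br a1 a2 a3) a4 =
    ρ a2 a3 ∘ₗ ρ a1 a4 + ρ a3 a1 ∘ₗ ρ a2 a4 + ρ a1 a2 ∘ₗ ρ a3 a4) ∧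
  (∀ a1 a2 a3 a4 : A, ρ a1 a2 ∘ₗ ρ a3 a4 =
    ρ a3 a4 ∘ₗ ρ a1 a2 + ρ (br a1 a2 a3) a4 + ρ a3 (br a1 a2 a4))

/-- Compatibility of `dM` making `(M, ρ, dM)` a representation of the modified
`lam`-differential 3-Lie algebra `(A, br, d)`. -/
def IsMDiffRep (ρ : A → A → M →ₗ[k] M) (lam : k) (d : A → A) (dM : M → M) : Prop :=
  ∀ (a b : A) (v : M), dM (ρ a b v) =
    ρ (d a) b v + ρ a (d b) v + ρ a b (dM v) + lam • ρ a b v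

end Prelude

/-- The 2-cocycle condition for a pair `(f, g)` with coefficients in `(M, ρ, dM)`. -/
def IsTwoCocycle {k A M : Type*} [Field k] [AddCommGroup A] [Module k A]
    [AddCommGroup M] [Module k M] (br : A → A → A → A) (lam : k)
    (d : A → A) (ρ : A → A → M →ₗ[k] M) (dM : M → M)
    (f : A → A → A → M) (g : A → M) : Prop :=
  (∀ a1 a2 a3 a4 a5 : A,
    ρ a4 a5 (f a1 a2 a3) + f (br a1 a2 a3) a4 a5 +
      ρ a5 a3 (f a1 a2 a4) + f a3 (br a1 a2 a4) a5 +
        ρ a3 a4 (f a1 a2 a5) + f a3 a4 (br a1 a2 a5) -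
          ρ a1 a2 (f a3 a4 a5) - f a1 a2 (br a3 a4 a5) = 0) ∧
  (∀ a1 a2 a3 : A,
    ρ a2 a3 (g a1) + f (d a1) a2 a3 + ρ a3 a1 (g a2) + f a1 (d a2) a3 +
      ρ a1 a2 (g a3) + f a1 a2 (d a3) + lam • f a1 a2 a3 -
        dM (f a1 a2 a3) - g (br a1 a2 a3) = 0)

/-- if two 2-cocycles `(f1, g1)` and `(f2, g2)` differ by the coboundary of
a linear map `ι : A → M`, then `η(a+u) = a + ι(a) + u` is an isomorphism of the
corresponding abelian extensions `(A ⊕ M, [-,-,-]_{ρf1}, d_{g1})` and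
`(A ⊕ M, [-,-,-]_{ρf2}, d_{g2})` which is the identity on `M` and commutes with the
projections onto `A`. -/
theorem stmt17 {k A M : Type*} [Field k] [CharZero k] [AddCommGroup A] [Module k A]
    [AddCommGroup M] [Module k M]
    (br : A → A → A → A) (lam : k) (d : A →ₗ[k] A)
    (h3 : Is3LieBr k br) (hd : IsMDiffOn k br lam ⇑d)
    (ρ : A → A → M →ₗ[k] M) (hρ : Is3LieRep k br ρ) (dM : M →ₗ[k] M)
    (hdM : IsMDiffRep k ρ lam ⇑d ⇑dM)
    (f1 f2 : A → A → A → M) (hf1 : IsTriSkew k f1) (hf2 : IsTriSkew k f2)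
    (g1 g2 : A →ₗ[k] M)
    (hc1 : IsTwoCocycle br lam ⇑d ρ ⇑dM f1 ⇑g1)
    (hc2 : IsTwoCocycle br lam ⇑d ρ ⇑dM f2 ⇑g2)
    (ι : A →ₗ[k] M)
    (hfdiff : ∀ a1 a2 a3 : A,
      f1 a1 a2 a3 - f2 a1 a2 a3 =
        ρ a2 a3 (ι a1) + ρ a3 a1 (ι a2) + ρ a1 a2 (ι a3) - ι (br a1 a2 a3))
    (hgdiff : ∀ a : A, g1 a - g2 a = dM (ι a) - ι (d a)) :
    Function.Bijective (fun x : A × M => ((x.1 : A), (ι x.1 + x.2 : M))) ∧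
      (∀ x y z : A × M,
        (fun x : A × M => ((x.1 : A), (ι x.1 + x.2 : M)))
            ((br x.1 y.1 z.1 : A),
              (ρ y.1 z.1 x.2 + ρ z.1 x.1 y.2 + ρ x.1 y.1 z.2 + f1 x.1 y.1 z.1 : M)) =
          ((br x.1 y.1 z.1 : A),
            (ρ y.1 z.1 (ι x.1 + x.2) + ρ z.1 x.1 (ι y.1 + y.2) +
              ρ x.1 y.1 (ι z.1 + z.2) + f2 x.1 y.1 z.1 : M))) ∧
      (∀ x : A × M,
        (fun x : A × M => ((x.1 : A), (ι x.1 + x.2 : M)))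
            ((d x.1 : A), (dM x.2 + g1 x.1 : M)) =
          ((d x.1 : A), (dM (ι x.1 + x.2) + g2 x.1 : M))) ∧
      (∀ u : M, (fun x : A × M => ((x.1 : A), (ι x.1 + x.2 : M))) ((0 : A), u)
          = ((0 : A), u)) ∧
      (∀ x : A × M, ((fun x : A × M => ((x.1 : A), (ι x.1 + x.2 : M))) x).1 = x.1) := by
  
  refine ⟨?_, ?_, ?_, ?_, ?_⟩
  · constructor
    · intro x y h
      simp only [Prod.mk.injEq] at h
      obtain ⟨h1, h2⟩ := h
      rw [h1] at h2
      exact Prod.ext h1 (by exact add_left_cancel h2)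
    · intro y
      exact ⟨(y.1, y.2 - ι y.1), by simp⟩
  · intro x y z
    simp only [Prod.mk.injEq, true_and]
    have := hfdiff x.1 y.1 z.1
    simp only [map_add]
    have h2 : f1 x.1 y.1 z.1 = ρ y.1 z.1 (ι x.1) + ρ z.1 x.1 (ι y.1) +
        ρ x.1 y.1 (ι z.1) - ι (br x.1 y.1 z.1) + f2 x.1 y.1 z.1 := by
      linear_combination (norm := abel) this
    rw [h2]; abel
  · intro x
    simp only [Prod.mk.injEq, true_and, map_add]
    have := hgdiff x.1
    have h2 : g1 x.1 = dM (ι x.1) - ι (d x.1) + g2 x.1 := by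
      linear_combination (norm := abel) this
    rw [h2]; abel
  · intro u; simp
  · intro x; rfl
end

section
/- Let (A,[-,-,-],d) be a modified λ-differential 3-Lie algebra, A* its dual space, ad*(a1,a2)α = -α∘ad(a1,a2) (where ad(a1,a2)(a) = [a1,a2,a]) and d*α = α∘d. Let f : A×A×A → A* be trilinear skew-symmetric and g : A → A* linear, and define on A⊕A* the bracket [a1+α1,a2+α2,a3+α3]_f = [a1,a2,a3] + ad*(a2,a3)α1 + ad*(a3,a1)α2 + ad*(a1,a2)α3 + f(a1,a2,a3) and the linear map d_g(a+α) = d(a) - d*(α) + g(a). Then (A⊕A*, [-,-,-]_f, d_g) is a modified λ-differential 3-Lie algebra if and only if (f,g) is a 2-cocycle with coefficients in the representation (A*; ad*, -d*), i.e. for all a1,...,a5 ∈ A: ad*(a4,a5)f(a1,a2,a3) + f([a1,a2,a3],a4,a5) + ad*(a5,a3)f(a1,a2,a4) + f(a3,[a1,a2,a4],a5) + ad*(a3,a4)f(a1,a2,a5) + f(a3,a4,[a1,a2,a5]) - ad*(a1,a2)f(a3,a4,a5) - f(a1,a2,[a3,a4,a5]) = 0, and for all a1,a2,a3 ∈ A: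 ad*(a2,a3)g(a1) + f(d(a1),a2,a3) + ad*(a3,a1)g(a2) + f(a1,d(a2),a3) + ad*(a1,a2)g(a3) + f(a1,a2,d(a3)) + λf(a1,a2,a3) + d*(f(a1,a2,a3)) - g([a1,a2,a3]) = 0. -/
open Finset

/-! Both sides of each identity in `A × A*` are compared componentwise. The `A`-components are
the identities of `(A, br, d)` itself. The `A*`-components, evaluated at `a : A`, split into the
terms linear in the `α`'s, which cancel because `(A*, ad*, -d*)` is a representation (this is where
the Filippov identity and the differential identity of `A` enter), and the terms in `f` and `g`,
which are exactly the two cocycle expressions; at points with all `α`'s zero only the latter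
remain. -/

theorem map_neg_of_map_smul_add {R V W : Type*} [Ring R] [AddCommGroup V] [Module R V]
    [AddCommGroup W] [Module R W] {F : V → W}
    (h : ∀ (t : R) (a a' : V), F (t • a + a') = t • F a + F a') (a : V) : F (-a) = -F a := by
  have h0 : F 0 = 0 := by simpa using h 1 0 0
  simpa [h0] using h (-1) a 0

namespace IsTriSkew

variable {k A W : Type*} [Field k] [AddCommGroup A] [Module k A] [AddCommGroup W] [Module k W]
  {f : A → A → A → W}

theorem neg_left (hf : IsTriSkew k f) (a b c : A) : f (-a) b c = -f a b c :=
  map_neg_of_map_smul_add (F := fun u => f u b c) (fun t u u' => hf.1 t u u' b c) a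

theorem neg_mid (hf : IsTriSkew k f) (a b c : A) : f a (-b) c = -f a b c :=
  map_neg_of_map_smul_add (F := fun u => f a u c) (fun t u u' => hf.2.1 t a u u' c) b

theorem neg_right (hf : IsTriSkew k f) (a b c : A) : f a b (-c) = -f a b c :=
  map_neg_of_map_smul_add (F := fun u => f a b u) (fun t u u' => hf.2.2.1 t a b u u') c

theorem cyclic (hf : IsTriSkew k f) (a b c : A) : f a b c = f b c a := by
  rw [hf.2.2.2.1, hf.2.2.2.2 b a c, neg_neg]

theorem map_swap₁₂ {M : Type*} [AddCommGroup M] [Module k M] (hf : IsTriSkew k f)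
    (φ : W →ₗ[k] M) (a b c : A) : φ (f a b c) = -φ (f b a c) := by
  rw [hf.2.2.2.1, map_neg]

end IsTriSkew

-- Three times the left side is a combination of seven instances of the Filippov identity.
theorem Is3LieBr.br_br_add_cyclic_eq_zero {k A : Type*} [Field k] [CharZero k]
    [AddCommGroup A] [Module k A] {br : A → A → A → A} (h3 : Is3LieBr k br) (b x y z w : A) :
    br b (br x y z) w + br b x (br y z w) + br b y (br z x w) + br b z (br x y w) = 0 := by
  obtain ⟨hbr, F⟩ := h3
  have swap_mid : ∀ u v v', br u (br b v v') w = br (br b v' v) u w := fun u v v' => by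
    rw [hbr.2.2.2.1 u, hbr.2.2.2.2 b v v', hbr.neg_left, neg_neg]
  have hA1 : br b x (br y z w) = br (br b x y) z w + br (br b z x) y w + br y z (br b x w) := by
    rw [F b x y z w, swap_mid y x z]
  have hA2 : br b y (br z x w) = br (br b y z) x w + br (br b x y) z w + br z x (br b y w) := by
    rw [F b y z x w, swap_mid z y x]
  have hA3 : br b z (br x y w) = br (br b z x) y w + br (br b y z) x w + br x y (br b z w) := by
    rw [F b z x y w, swap_mid x z y]
  have hB1 : br y z (br b x w) = br (br b y z) x w + br b (br x y z) w + br b x (br y z w) := by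
    rw [F y z b x w, ← hbr.cyclic b y z, hbr.cyclic x y z]
  have hB2 : br z x (br b y w) = br (br b z x) y w + br b (br x y z) w + br b y (br z x w) := by
    rw [F z x b y w, ← hbr.cyclic b z x, ← hbr.cyclic y z x, ← hbr.cyclic x y z]
  have hB3 : br x y (br b z w) = br (br b x y) z w + br b (br x y z) w + br b z (br x y w) := by
    rw [F x y b z w, ← hbr.cyclic b x y]
  have hC : br b (br x y z) w = br y z (br b x w) + br z x (br b y w) + br x y (br b z w) := by
    have h := F b w x y z
    simp only [hbr.2.2.2.2 b w, hbr.neg_left, hbr.neg_mid, hbr.neg_right] at h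
    rw [hbr.cyclic (br b x w) y z, hbr.cyclic x (br b y w) z, hbr.cyclic (br b y w) z x] at h
    linear_combination (norm := module) -h
  linear_combination (norm := module) (1/3 : k) • (hA1 + hA2 + hA3)
    - (2/3 : k) • (hB1 + hB2 + hB3) - hC

namespace TStarExtension

open Module

variable {k A : Type*} [Field k] [AddCommGroup A] [Module k A]

/-- `[-,-,-]_f` on `A ⊕ A*`; the coadjoint action `ad*(a, b)` is `-(ad a b).dualMap`. -/
def bracket (br : A → A → A → A) (ad : A → A → A →ₗ[k] A) (f : A → A → A → Dual k A)
    (x y z : A × Dual k A) : A × Dual k A :=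
  (br x.1 y.1 z.1, -((ad y.1 z.1).dualMap x.2) - (ad z.1 x.1).dualMap y.2 -
    (ad x.1 y.1).dualMap z.2 + f x.1 y.1 z.1)

def diffOp (d : A →ₗ[k] A) (g : A →ₗ[k] Dual k A) (x : A × Dual k A) : A × Dual k A :=
  (d x.1, -(d.dualMap x.2) + g x.1)

variable {br : A → A → A → A} {ad : A → A → A →ₗ[k] A} {f : A → A → A → Dual k A}

@[simp]
theorem bracket_fst (x y z : A × Dual k A) : (bracket br ad f x y z).1 = br x.1 y.1 z.1 := rfl

theorem bracket_snd_apply (had : ∀ a b v, ad a b v = br a b v) (x y z : A × Dual k A) (a : A) :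
    (bracket br ad f x y z).2 a =
      -x.2 (br y.1 z.1 a) - y.2 (br z.1 x.1 a) - z.2 (br x.1 y.1 a) + f x.1 y.1 z.1 a := by
  simp [bracket, had]

@[simp]
theorem diffOp_fst (d : A →ₗ[k] A) (g : A →ₗ[k] Dual k A) (x : A × Dual k A) :
    (diffOp d g x).1 = d x.1 := rfl

@[simp]
theorem diffOp_snd_apply (d : A →ₗ[k] A) (g : A →ₗ[k] Dual k A) (x : A × Dual k A) (a : A) :
    (diffOp d g x).2 a = -x.2 (d a) + g x.1 a := by
  simp [diffOp]

theorem isTriSkew_bracket (hbr : IsTriSkew k br) (hf : IsTriSkew k f)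
    (had : ∀ a b v, ad a b v = br a b v) : IsTriSkew k (bracket br ad f) := by
  have coadjoint_swap := hbr.map_swap₁₂ (M := k)
  obtain ⟨br_lin₁, br_lin₂, br_lin₃, br_swap₁₂, br_swap₂₃⟩ := hbr
  obtain ⟨f_lin₁, f_lin₂, f_lin₃, f_swap₁₂, f_swap₂₃⟩ := hf
  refine ⟨fun t x x' y z => ?_, fun t x y y' z => ?_, fun t x y z z' => ?_,
    fun x y z => Prod.ext (br_swap₁₂ ..) (LinearMap.ext fun a => ?_),
    fun x y z => Prod.ext (br_swap₂₃ ..) (LinearMap.ext fun a => ?_)⟩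
  iterate 3
    refine Prod.ext (by simp [br_lin₁, br_lin₂, br_lin₃]) (LinearMap.ext fun a => ?_)
    simp only [bracket_snd_apply had, Prod.fst_add, Prod.smul_fst, Prod.snd_add, Prod.smul_snd,
      LinearMap.add_apply, LinearMap.smul_apply, br_lin₁, br_lin₂, f_lin₁, f_lin₂, f_lin₃,
      map_add, map_smul, smul_eq_mul]
    ring
  all_goals simp only [bracket_snd_apply had, Prod.snd_neg, LinearMap.neg_apply]
  · have hf_swap : f x.1 y.1 z.1 a = -f y.1 x.1 z.1 a := by rw [f_swap₁₂, LinearMap.neg_apply]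
    linear_combination -(coadjoint_swap x.2 y.1 z.1 a) - coadjoint_swap y.2 z.1 x.1 a -
      coadjoint_swap z.2 x.1 y.1 a + hf_swap
  · have hf_swap : f x.1 y.1 z.1 a = -f x.1 z.1 y.1 a := by rw [f_swap₂₃, LinearMap.neg_apply]
    linear_combination -(coadjoint_swap x.2 y.1 z.1 a) - coadjoint_swap y.2 z.1 x.1 a -
      coadjoint_swap z.2 x.1 y.1 a + hf_swap

theorem is3LieBr_bracket_iff [CharZero k] (h3 : Is3LieBr k br) (hf : IsTriSkew k f)
    (had : ∀ a b v, ad a b v = br a b v) :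
    Is3LieBr k (bracket br ad f) ↔ ∀ a1 a2 a3 a4 a5 : A,
      -((ad a4 a5).dualMap (f a1 a2 a3)) + f (br a1 a2 a3) a4 a5 +
        -((ad a5 a3).dualMap (f a1 a2 a4)) + f a3 (br a1 a2 a4) a5 +
          -((ad a3 a4).dualMap (f a1 a2 a5)) + f a3 a4 (br a1 a2 a5) -
            -((ad a1 a2).dualMap (f a3 a4 a5)) - f a1 a2 (br a3 a4 a5) = 0 := by
  rw [Is3LieBr, and_iff_right (isTriSkew_bracket h3.1 hf had)]
  constructor
  · intro hFil a1 a2 a3 a4 a5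
    ext a
    have h := congr_arg (fun x => x.2 a) (hFil (a1, 0) (a2, 0) (a3, 0) (a4, 0) (a5, 0))
    simp only [bracket_snd_apply had, bracket_fst, Prod.snd_add, LinearMap.add_apply,
      LinearMap.zero_apply] at h
    simp only [LinearMap.add_apply, LinearMap.sub_apply, LinearMap.neg_apply,
      LinearMap.dualMap_apply, had, LinearMap.zero_apply]
    linear_combination -h
  · intro C1 x1 x2 x3 x4 x5
    refine Prod.ext (h3.2 ..) (LinearMap.ext fun a => ?_)
    have coadjoint_swap := h3.1.map_swap₁₂ (M := k)
    have filippov_dual : ∀ (φ : Dual k A) (a1 a2 a3 a4 a5 : A),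
        φ (br a1 a2 (br a3 a4 a5)) = φ (br (br a1 a2 a3) a4 a5) + φ (br a3 (br a1 a2 a4) a5) +
          φ (br a3 a4 (br a1 a2 a5)) := fun φ a1 a2 a3 a4 a5 => by
      rw [h3.2, map_add, map_add]
    have cyclic_dual : ∀ (φ : Dual k A) (b x y z w : A),
        φ (br b (br x y z) w) + φ (br b x (br y z w)) + φ (br b y (br z x w)) +
          φ (br b z (br x y w)) = 0 := fun φ b x y z w => by
      rw [← map_add, ← map_add, ← map_add, h3.br_br_add_cyclic_eq_zero, map_zero]
    have c1a := LinearMap.congr_fun (C1 x1.1 x2.1 x3.1 x4.1 x5.1) a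
    simp only [LinearMap.dualMap_apply, LinearMap.add_apply, LinearMap.neg_apply,
      LinearMap.sub_apply, LinearMap.zero_apply, had] at c1a
    simp only [bracket_snd_apply had, bracket_fst, Prod.snd_add, LinearMap.add_apply]
    linear_combination -(cyclic_dual x1.2 x2.1 x3.1 x4.1 x5.1 a)
      + cyclic_dual x2.2 x1.1 x3.1 x4.1 x5.1 a
      - coadjoint_swap x2.2 (br x3.1 x4.1 x5.1) x1.1 a
      - coadjoint_swap x2.2 x3.1 x1.1 (br x4.1 x5.1 a)
      - coadjoint_swap x2.2 x4.1 x1.1 (br x5.1 x3.1 a)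
      - coadjoint_swap x2.2 x5.1 x1.1 (br x3.1 x4.1 a)
      - filippov_dual x3.2 x1.1 x2.1 x4.1 x5.1 a
      - filippov_dual x4.2 x1.1 x2.1 x5.1 x3.1 a
      - filippov_dual x5.2 x1.1 x2.1 x3.1 x4.1 a
      - c1a

theorem isMDiffOn_bracket_diffOp_iff {lam : k} {d : A →ₗ[k] A} (hd : IsMDiffOn k br lam d)
    (g : A →ₗ[k] Dual k A) (had : ∀ a b v, ad a b v = br a b v) :
    IsMDiffOn k (bracket br ad f) lam (diffOp d g) ↔ ∀ a1 a2 a3 : A,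
      -((ad a2 a3).dualMap (g a1)) + f (d a1) a2 a3 +
        -((ad a3 a1).dualMap (g a2)) + f a1 (d a2) a3 +
          -((ad a1 a2).dualMap (g a3)) + f a1 a2 (d a3) +
            lam • f a1 a2 a3 + d.dualMap (f a1 a2 a3) - g (br a1 a2 a3) = 0 := by
  constructor
  · intro hDiff a1 a2 a3
    ext a
    have h := congr_arg (fun x => x.2 a) (hDiff (a1, 0) (a2, 0) (a3, 0))
    simp only [bracket_snd_apply had, bracket_fst, diffOp_snd_apply, diffOp_fst, Prod.snd_add,
      Prod.smul_snd, LinearMap.add_apply, LinearMap.smul_apply, LinearMap.zero_apply,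
      smul_eq_mul] at h
    simp only [LinearMap.add_apply, LinearMap.sub_apply, LinearMap.neg_apply,
      LinearMap.dualMap_apply, had, LinearMap.smul_apply, smul_eq_mul, LinearMap.zero_apply]
    linear_combination -h
  · intro C2 x y z
    refine Prod.ext (hd ..) (LinearMap.ext fun a => ?_)
    have differential_dual : ∀ (φ : Dual k A) (a b c : A), φ (d (br a b c)) =
        φ (br (d a) b c) + φ (br a (d b) c) + φ (br a b (d c)) + lam * φ (br a b c) :=
      fun φ a b c => by rw [hd, map_add, map_add, map_add, map_smul, smul_eq_mul]
    have c2a := LinearMap.congr_fun (C2 x.1 y.1 z.1) a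
    simp only [LinearMap.dualMap_apply, LinearMap.add_apply, LinearMap.neg_apply,
      LinearMap.sub_apply, LinearMap.zero_apply, LinearMap.smul_apply, had, smul_eq_mul] at c2a
    simp only [bracket_snd_apply had, bracket_fst, diffOp_fst, diffOp_snd_apply, Prod.snd_add,
      Prod.smul_snd, LinearMap.add_apply, LinearMap.smul_apply, smul_eq_mul]
    linear_combination -differential_dual x.2 y.1 z.1 a - differential_dual y.2 z.1 x.1 a -
      differential_dual z.2 x.1 y.1 a - c2a

end TStarExtension

/-- the `T*`-extension `(A ⊕ A*, [-,-,-]_f, d_g)` built from the dual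
adjoint representation `(A*, ad*, -d*)` is a modified `λ`-differential 3-Lie algebra
iff `(f, g)` is a 2-cocycle with coefficients in `(A*, ad*, -d*)`. -/
theorem stmt18 {k A : Type*} [Field k] [CharZero k] [AddCommGroup A] [Module k A]
    (br : A → A → A → A) (lam : k) (d : A →ₗ[k] A)
    (h3 : Is3LieBr k br) (hd : IsMDiffOn k br lam ⇑d)
    (ad : A → A → A →ₗ[k] A) (had : ∀ a b v : A, ad a b v = br a b v)
    (f : A → A → A → Module.Dual k A) (hf : IsTriSkew k f)
    (g : A →ₗ[k] Module.Dual k A) :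
    (Is3LieBr k (fun x y z : A × Module.Dual k A =>
        ((br x.1 y.1 z.1 : A),
          (-((ad y.1 z.1).dualMap x.2) - (ad z.1 x.1).dualMap y.2 -
            (ad x.1 y.1).dualMap z.2 + f x.1 y.1 z.1 : Module.Dual k A))) ∧
      IsMDiffOn k (fun x y z : A × Module.Dual k A =>
        ((br x.1 y.1 z.1 : A),
          (-((ad y.1 z.1).dualMap x.2) - (ad z.1 x.1).dualMap y.2 -
            (ad x.1 y.1).dualMap z.2 + f x.1 y.1 z.1 : Module.Dual k A)))
        lam
        (fun x : A × Module.Dual k A =>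
          ((d x.1 : A), (-(d.dualMap x.2) + g x.1 : Module.Dual k A)))) ↔
    ((∀ a1 a2 a3 a4 a5 : A,
        -((ad a4 a5).dualMap (f a1 a2 a3)) + f (br a1 a2 a3) a4 a5 +
          -((ad a5 a3).dualMap (f a1 a2 a4)) + f a3 (br a1 a2 a4) a5 +
            -((ad a3 a4).dualMap (f a1 a2 a5)) + f a3 a4 (br a1 a2 a5) -
              -((ad a1 a2).dualMap (f a3 a4 a5)) - f a1 a2 (br a3 a4 a5) = 0) ∧
      (∀ a1 a2 a3 : A,
        -((ad a2 a3).dualMap (g a1)) + f (d a1) a2 a3 +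
          -((ad a3 a1).dualMap (g a2)) + f a1 (d a2) a3 +
            -((ad a1 a2).dualMap (g a3)) + f a1 a2 (d a3) +
              lam • f a1 a2 a3 + d.dualMap (f a1 a2 a3) - g (br a1 a2 a3) = 0)) := by
  exact and_congr (TStarExtension.is3LieBr_bracket_iff h3 hf had)
    (TStarExtension.isMDiffOn_bracket_diffOp_iff hd g had)
end

section
/- Let (A,[-,-,-],d) be a modified λ-differential 3-Lie algebra and let (f,g) be a 2-cocycle with coefficients in the dual adjoint representation (A*; ad*, -d*), so that the T*-extension T*_{(f,g)}(A) = (A⊕A*, [-,-,-]_f, d_g) is a modified λ-differential 3-Lie algebra. Define the symmetric bilinear form ϖ on A⊕A* by ϖ(a1+α1, a2+α2) = α1(a2) + α2(a1). Then (T*_{(f,g)}(A), ϖ) is a metrised modified λ-differential 3-Lie algebra — i.e. ϖ satisfies ϖ([x1,x2,x3]_f, x4) + ϖ(x3, [x1,x2,x4]_f) = 0 and ϖ(d_g(x1), x2) + ϖ(x1, d_g(x2)) = 0 for all x1,x2,x3,x4 ∈ A⊕A* — if and only if f(a1,a2,a3)(a4) + f(a1,a2,a4)(a3) = 0 and g(a1)(a2)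 + g(a2)(a1) = 0 for all a1,a2,a3,a4 ∈ A. -/
open Finset

/-- the `T*`-extension `T*_{(f,g)}(A) = (A ⊕ A*, [-,-,-]_f, d_g)` of a
modified `λ`-differential 3-Lie algebra, equipped with the symmetric bilinear form
`ϖ(a1+α1, a2+α2) = α1(a2) + α2(a1)`, is a metrised modified `λ`-differential 3-Lie
algebra iff `f(a1,a2,a3)(a4) + f(a1,a2,a4)(a3) = 0` and `g(a1)(a2) + g(a2)(a1) = 0`. -/
theorem stmt19 {k A : Type*} [Field k] [CharZero k] [AddCommGroup A] [Module k A]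
    (br : A → A → A → A) (lam : k) (d : A →ₗ[k] A)
    (h3 : Is3LieBr k br) (hd : IsMDiffOn k br lam ⇑d)
    (ad : A → A → A →ₗ[k] A) (had : ∀ a b v : A, ad a b v = br a b v)
    (f : A → A → A → Module.Dual k A) (hf : IsTriSkew k f)
    (g : A →ₗ[k] Module.Dual k A)
    (brf : A × Module.Dual k A → A × Module.Dual k A → A × Module.Dual k A →
      A × Module.Dual k A)
    (hbrf : ∀ x y z : A × Module.Dual k A,
      brf x y z =
        ((br x.1 y.1 z.1 : A),
          (-((ad y.1 z.1).dualMap x.2) - (ad z.1 x.1).dualMap y.2 -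
            (ad x.1 y.1).dualMap z.2 + f x.1 y.1 z.1 : Module.Dual k A)))
    (dg : A × Module.Dual k A → A × Module.Dual k A)
    (hdg : ∀ x : A × Module.Dual k A,
      dg x = ((d x.1 : A), (-(d.dualMap x.2) + g x.1 : Module.Dual k A)))
    (hT3 : Is3LieBr k brf) (hTd : IsMDiffOn k brf lam dg)
    (ϖ : A × Module.Dual k A → A × Module.Dual k A → k)
    (hϖ : ∀ x y : A × Module.Dual k A, ϖ x y = x.2 y.1 + y.2 x.1) :
    ((∀ x y : A × Module.Dual k A, ϖ x y = ϖ y x) ∧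
      (∀ x : A × Module.Dual k A, (∀ y, ϖ x y = 0) → x = 0) ∧
      (∀ x1 x2 x3 x4 : A × Module.Dual k A,
        ϖ (brf x1 x2 x3) x4 + ϖ x3 (brf x1 x2 x4) = 0) ∧
      (∀ x1 x2 : A × Module.Dual k A, ϖ (dg x1) x2 + ϖ x1 (dg x2) = 0)) ↔
    ((∀ a1 a2 a3 a4 : A, f a1 a2 a3 a4 + f a1 a2 a4 a3 = 0) ∧
      (∀ a1 a2 : A, g a1 a2 + g a2 a1 = 0)) := by
  obtain ⟨⟨-, -, -, hsk12, hsk23⟩, -⟩ := h3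
  constructor
  · rintro ⟨-, -, hbr, hdd⟩
    refine ⟨fun a1 a2 a3 a4 => ?_, fun a1 a2 => ?_⟩
    · have := hbr (a1, 0) (a2, 0) (a3, 0) (a4, 0)
      simpa [hϖ, hbrf] using this
    · have := hdd (a1, 0) (a2, 0)
      simpa [hϖ, hdg] using this
  · rintro ⟨hF, hG⟩
    refine ⟨fun x y => by rw [hϖ, hϖ]; ring, ?_, ?_, ?_⟩
    · intro x hx
      have h1 : x.2 = 0 := by
        ext v
        have := hx (v, 0)
        simpa [hϖ] using this
      have h2 : x.1 = 0 := by
        rw [← Module.forall_dual_apply_eq_zero_iff k]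
        intro φ
        have := hx (0, φ)
        simpa [hϖ, h1] using this
      exact Prod.ext h2 h1
    · intro x1 x2 x3 x4
      have e1 : br x2.1 x3.1 x4.1 = - br x2.1 x4.1 x3.1 := hsk23 _ _ _
      have e2 : br x3.1 x1.1 x4.1 = - br x4.1 x1.1 x3.1 := by
        rw [hsk23 x3.1 x1.1 x4.1, hsk12 x3.1 x4.1 x1.1, hsk23 x4.1 x3.1 x1.1]
        rw [hsk12 x4.1 x1.1 x3.1]
        simp
      simp only [hϖ, hbrf, LinearMap.add_apply, LinearMap.sub_apply,
        LinearMap.neg_apply, LinearMap.dualMap_apply, had, e1, e2, map_neg]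
      linear_combination hF x1.1 x2.1 x3.1 x4.1
    · intro x1 x2
      simp only [hϖ, hdg, LinearMap.add_apply, LinearMap.neg_apply,
        LinearMap.dualMap_apply]
      linear_combination hG x1.1 x2.1
end
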